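/- arXiv:2504.12839 — 6 statements merged into one kernel-verified Lean document; each statement's English description precedes it below -/
import Mathlib

section
/- Let t > 0 and ρ ∈ ℝ with ρ ≥ e·t. Then for every n ∈ ℕ with n ≤ ρ, one has t^ρ · (4/e²) · (e/(ρ+2))^{ρ+2} ≤ t^n / n!. -/
open Real

/-!
With `u = e t` the left-hand side is `4 u^ρ / (ρ+2)^(ρ+2)`. As `u ≤ ρ + 2`, trading the factor
`u^(ρ-n)` for `(ρ+2)^(ρ-n)` bounds it by `4 u^n / (n+2)^(n+2)`, and this is at most `t^n / n!`
because `4 e^n n! ≤ (n+2)^(n+2)`. The latter follows by induction from `e m^(m+1) ≤ (m+1)^(m+1)`,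
which is `(1 - 1/(m+1))^(m+1) ≤ e^(-1)`.
-/

theorem exp_one_mul_pow_le_add_one_pow {x : ℝ} {k : ℕ} (hx : 0 ≤ x) (hk : x + 1 ≤ k) :
    exp 1 * x ^ k ≤ (x + 1) ^ k := by
  have hx1 : 0 < x + 1 := by linarith
  have hratio : x / (x + 1) ≤ exp (-(1 / (x + 1))) := by
    convert add_one_le_exp (-(1 / (x + 1))) using 1
    field_simp
    ring
  have hpow : (x / (x + 1)) ^ k ≤ exp (-1) :=
    calc (x / (x + 1)) ^ k ≤ exp (-(1 / (x + 1))) ^ k := by gcongr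
      _ = exp (-(k / (x + 1))) := by rw [← exp_nat_mul]; ring_nf
      _ ≤ exp (-1) := by gcongr; rwa [le_div_iff₀ hx1, one_mul]
  rw [div_pow, div_le_iff₀ (by positivity), exp_neg] at hpow
  calc exp 1 * x ^ k ≤ exp 1 * ((exp 1)⁻¹ * (x + 1) ^ k) := by gcongr
    _ = (x + 1) ^ k := by field_simp

theorem four_mul_exp_one_pow_mul_factorial_le (n : ℕ) :
    4 * exp 1 ^ n * n.factorial ≤ ((n : ℝ) + 2) ^ (n + 2) := by
  induction n with
  | zero => norm_num
  | succ n ih =>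
    have hstep := exp_one_mul_pow_le_add_one_pow (x := (n : ℝ) + 2) (k := n + 3)
      (by positivity) (by push_cast; linarith)
    calc 4 * exp 1 ^ (n + 1) * ((n + 1).factorial : ℝ)
        = exp 1 * (n + 1) * (4 * exp 1 ^ n * n.factorial) := by
          push_cast [Nat.factorial_succ]; ring
      _ ≤ exp 1 * ((n : ℝ) + 2) * ((n : ℝ) + 2) ^ (n + 2) := by
          gcongr
          linarith
      _ = exp 1 * ((n : ℝ) + 2) ^ (n + 3) := by ring
      _ ≤ ((n : ℝ) + 2 + 1) ^ (n + 3) := hstep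
      _ = (((n + 1 : ℕ) : ℝ) + 2) ^ (n + 1 + 2) := by push_cast; ring

theorem rpow_div_rpow_add_two_le {u s ρ : ℝ} (hu : 0 < u) (hs : 0 < s + 2) (hsρ : s ≤ ρ)
    (huρ : u ≤ ρ + 2) :
    u ^ ρ / (ρ + 2) ^ (ρ + 2) ≤ u ^ s / (s + 2) ^ (s + 2) := by
  have hρ : 0 < ρ + 2 := by linarith
  calc u ^ ρ / (ρ + 2) ^ (ρ + 2) = u ^ s * u ^ (ρ - s) / (ρ + 2) ^ (ρ + 2) := by
        rw [← rpow_add hu, add_sub_cancel]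
    _ ≤ u ^ s * (ρ + 2) ^ (ρ - s) / (ρ + 2) ^ (ρ + 2) := by gcongr
    _ = u ^ s / (ρ + 2) ^ (s + 2) := by
        rw [mul_div_assoc, ← rpow_sub hρ, show ρ - s - (ρ + 2) = -(s + 2) by ring,
          rpow_neg hρ.le, div_eq_mul_inv]
    _ ≤ u ^ s / (s + 2) ^ (s + 2) := by gcongr

theorem four_mul_exp_one_mul_pow_div_le (x : ℝ) (hx : 0 ≤ x) (n : ℕ) :
    4 * (exp 1 * x) ^ n / ((n : ℝ) + 2) ^ (n + 2) ≤ x ^ n / n.factorial := by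
  rw [div_le_div_iff₀ (by positivity) (by positivity), mul_pow]
  calc 4 * (exp 1 ^ n * x ^ n) * n.factorial = x ^ n * (4 * exp 1 ^ n * n.factorial) := by ring
    _ ≤ x ^ n * ((n : ℝ) + 2) ^ (n + 2) := by gcongr; exact four_mul_exp_one_pow_mul_factorial_le n

/-- Corollary 1.4: if `t > 0` and `ρ ≥ e·t`, then for every natural `n ≤ ρ`,
`t^ρ · (4/e²) · (e/(ρ+2))^{ρ+2} ≤ t^n / n!`. -/
theorem rpow_factorial_bound (t ρ : ℝ) (ht : 0 < t) (hρ : Real.exp 1 * t ≤ ρ)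
    (n : ℕ) (hn : (n : ℝ) ≤ ρ) :
    t ^ ρ * (4 / Real.exp 1 ^ 2) * (Real.exp 1 / (ρ + 2)) ^ (ρ + 2) ≤
      t ^ n / (n.factorial : ℝ) := by
  have hρ2 : 0 < ρ + 2 := by linarith [mul_pos (exp_pos 1) ht]
  calc t ^ ρ * (4 / exp 1 ^ 2) * (exp 1 / (ρ + 2)) ^ (ρ + 2)
      = 4 * ((exp 1 * t) ^ ρ / (ρ + 2) ^ (ρ + 2)) := by
        rw [div_rpow (exp_pos 1).le hρ2.le, rpow_add (exp_pos 1), mul_rpow (exp_pos 1).le ht.le,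
          rpow_two]
        field_simp
    _ ≤ 4 * ((exp 1 * t) ^ (n : ℝ) / ((n : ℝ) + 2) ^ ((n : ℝ) + 2)) := by
        gcongr 4 * ?_
        exact rpow_div_rpow_add_two_le (by positivity) (by positivity) hn (by linarith)
    _ = 4 * (exp 1 * t) ^ n / ((n : ℝ) + 2) ^ (n + 2) := by
        rw [← mul_div_assoc, rpow_natCast, ← rpow_natCast _ (n + 2)]
        push_cast; rfl
    _ ≤ t ^ n / n.factorial := four_mul_exp_one_mul_pow_div_le t ht.le n
end

section
/- Let I, J be open intervals in ℝ, let f : I → ℝ be C^∞ with f(I) ⊆ J, let r ∈ ℕ ∪ {∞} and g : J → ℝ be of class C^r, and set h := g ∘ f. Let n ∈ ℕ with 1 ≤ n ≤ r, let t ∈ I, and let F, G ∈ ℝ with F ≥ 1 be such that |f^{(k)}(t)| ≤ F for k = 1, …, n and |g^{(m)}(f(t))| ≤ G for m = 1, …, n. Then |h^{(n)}(t)| ≤ G·(nF)^n. -/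
open Real Set

/-!
Faà di Bruno's formula bounds `‖D^n (g ∘ f)‖` by `n! · C · D^n` as soon as `‖D^i g‖ ≤ C` for
`0 ≤ i ≤ n` and `‖D^i f‖ ≤ D^i` for `1 ≤ i ≤ n`. Subtracting the constant `g (f x)` from `g`
changes no derivative of positive order and kills the order-zero term, so only the derivatives of
order `1, …, n` of `g` need to be bounded. With `D = F ≥ 1` we have `F ≤ F^k`, and `n! ≤ n^n`.
-/

open Nat

section

variable {𝕜 E F G : Type*} [NontriviallyNormedField 𝕜]
  [NormedAddCommGroup E] [NormedSpace 𝕜 E] [NormedAddCommGroup F] [NormedSpace 𝕜 F]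
  [NormedAddCommGroup G] [NormedSpace 𝕜 G]

theorem iteratedFDerivWithin_sub_const {f : E → F} {s : Set E} {n : ℕ} (hn : n ≠ 0) (c : F) :
    iteratedFDerivWithin 𝕜 n (fun y => f y - c) s = iteratedFDerivWithin 𝕜 n f s := by
  obtain ⟨n, rfl⟩ := Nat.exists_eq_succ_of_ne_zero hn
  induction n with
  | zero =>
    ext1 y
    simp only [iteratedFDerivWithin_succ_eq_comp_left, iteratedFDerivWithin_zero_eq_comp,
      Function.comp_apply, Function.comp_def, map_sub, fderivWithin_sub_const]
  | succ n ih =>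
    rw [iteratedFDerivWithin_succ_eq_comp_left, ih n.succ_ne_zero,
      ← iteratedFDerivWithin_succ_eq_comp_left]

theorem norm_iteratedFDerivWithin_comp_le_of_ne_zero {g : F → G} {f : E → F} {n : ℕ}
    {s : Set E} {t : Set F} {x : E} {N : WithTop ℕ∞} (hg : ContDiffOn 𝕜 N g t)
    (hf : ContDiffOn 𝕜 N f s) (hnN : n ≤ N) (hn : n ≠ 0) (ht : UniqueDiffOn 𝕜 t)
    (hs : UniqueDiffOn 𝕜 s) (hst : MapsTo f s t) (hx : x ∈ s) {C D : ℝ}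
    (hC : ∀ i, 1 ≤ i → i ≤ n → ‖iteratedFDerivWithin 𝕜 i g t (f x)‖ ≤ C)
    (hD : ∀ i, 1 ≤ i → i ≤ n → ‖iteratedFDerivWithin 𝕜 i f s x‖ ≤ D ^ i) :
    ‖iteratedFDerivWithin 𝕜 n (g ∘ f) s x‖ ≤ n ! * C * D ^ n := by
  have hC₀ : 0 ≤ C := (norm_nonneg _).trans (hC 1 le_rfl (one_le_iff_ne_zero.2 hn))
  have hshift : ∀ i ≤ n, ‖iteratedFDerivWithin 𝕜 i (fun y => g y - g (f x)) t (f x)‖ ≤ C := by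
    intro i hi
    rcases i.eq_zero_or_pos with rfl | hi₀
    · simpa using hC₀
    · rw [iteratedFDerivWithin_sub_const hi₀.ne']
      exact hC i hi₀ hi
  have key := norm_iteratedFDerivWithin_comp_le (hg.sub contDiffOn_const) hf hnN ht hs hst hx
    hshift hD
  rwa [show (fun y => g y - g (f x)) ∘ f = fun z => (g ∘ f) z - g (f x) from rfl,
    iteratedFDerivWithin_sub_const hn] at key

end

theorem faa_di_bruno_composition_bound_general
    (I J : Set ℝ) (hIopen : IsOpen I)
    (hJopen : IsOpen J)
    (f g : ℝ → ℝ)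
    (hf : ContDiffOn ℝ (⊤ : ℕ∞) f I) (hmaps : MapsTo f I J)
    (r : ℕ∞) (hg : ContDiffOn ℝ r g J)
    (n : ℕ) (hn : 1 ≤ n) (hnr : (n : ℕ∞) ≤ r)
    (t : ℝ) (ht : t ∈ I)
    (F G : ℝ) (hF : 1 ≤ F)
    (hfb : ∀ k : ℕ, 1 ≤ k → k ≤ n → |iteratedDerivWithin k f I t| ≤ F)
    (hgb : ∀ m : ℕ, 1 ≤ m → m ≤ n → |iteratedDerivWithin m g J (f t)| ≤ G) :
    |iteratedDerivWithin n (g ∘ f) I t| ≤ G * ((n : ℝ) * F) ^ n := by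
  have hG₀ : 0 ≤ G := (abs_nonneg _).trans (hgb 1 le_rfl hn)
  have hbound : |iteratedDerivWithin n (g ∘ f) I t| ≤ n ! * G * F ^ n := by
    rw [← Real.norm_eq_abs, ← norm_iteratedFDerivWithin_eq_norm_iteratedDerivWithin]
    refine norm_iteratedFDerivWithin_comp_le_of_ne_zero hg (hf.of_le (mod_cast le_top))
      (mod_cast hnr) (one_le_iff_ne_zero.1 hn) hJopen.uniqueDiffOn hIopen.uniqueDiffOn hmaps ht
      (fun m hm₁ hm => ?_) (fun k hk₁ hk => ?_)
    · rw [norm_iteratedFDerivWithin_eq_norm_iteratedDerivWithin]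
      exact hgb m hm₁ hm
    · rw [norm_iteratedFDerivWithin_eq_norm_iteratedDerivWithin]
      exact (hfb k hk₁ hk).trans (le_self_pow₀ hF (one_le_iff_ne_zero.1 hk₁))
  calc |iteratedDerivWithin n (g ∘ f) I t| ≤ n ! * G * F ^ n := hbound
    _ ≤ n ^ n * G * F ^ n := by gcongr; exact_mod_cast Nat.factorial_le_pow n
    _ = G * ((n : ℝ) * F) ^ n := by ring

/-- Lemma 2.1 (a bound coming from Faà di Bruno's formula): if `f` is `C^∞` on
an open interval `I` with `f(I) ⊆ J`, `g` is `C^r` on the open interval `J`,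
`h = g ∘ f`, `1 ≤ n ≤ r`, `t ∈ I`, `|f⁽ᵏ⁾(t)| ≤ F` for `1 ≤ k ≤ n` with
`F ≥ 1`, and `|g⁽ᵐ⁾(f(t))| ≤ G` for `1 ≤ m ≤ n`, then
`|h⁽ⁿ⁾(t)| ≤ G·(nF)^n`. -/
theorem faa_di_bruno_composition_bound
    (I J : Set ℝ) (hIopen : IsOpen I) (hIint : I.OrdConnected)
    (hJopen : IsOpen J) (hJint : J.OrdConnected)
    (f g : ℝ → ℝ)
    (hf : ContDiffOn ℝ (⊤ : ℕ∞) f I) (hmaps : MapsTo f I J)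
    (r : ℕ∞) (hg : ContDiffOn ℝ r g J)
    (n : ℕ) (hn : 1 ≤ n) (hnr : (n : ℕ∞) ≤ r)
    (t : ℝ) (ht : t ∈ I)
    (F G : ℝ) (hF : 1 ≤ F)
    (hfb : ∀ k : ℕ, 1 ≤ k → k ≤ n → |iteratedDerivWithin k f I t| ≤ F)
    (hgb : ∀ m : ℕ, 1 ≤ m → m ≤ n → |iteratedDerivWithin m g J (f t)| ≤ G) :
    |iteratedDerivWithin n (g ∘ f) I t| ≤ G * ((n : ℝ) * F) ^ n :=
  faa_di_bruno_composition_bound_general I J hIopen hJopen f g hf hmaps r hg n hn hnr t ht F G hF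
    hfb hgb
end

section
/- Let K be a commutative differential ring with derivation ∂ (writing a^{(n)} := ∂^n(a)), and let φ ∈ K be a unit. Then for every integer n ≥ 1, (φ^{-1})^{(n)} = Σ_{k=1}^{n} (−1)^k · C(n+1, k+1) · (φ^{-1})^{k+1} · (φ^k)^{(n)}. -/
open Finset

section Aux

variable {K : Type*} [CommRing K] (d : K → K)

private lemma done' (hleibniz : ∀ a b : K, d (a * b) = d a * b + a * d b) : d 1 = 0 := by
  have h := hleibniz 1 1
  simp only [mul_one, one_mul] at h
  exact (left_eq_add.mp h)

private lemma dpow_succ (hleibniz : ∀ a b : K, d (a * b) = d a * b + a * d b)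
    (x : K) : ∀ j : ℕ, d (x ^ (j + 1)) = ((j : K) + 1) * x ^ j * d x := by
  intro j
  induction j with
  | zero => simp
  | succ j ih =>
    have h : x ^ (j + 1 + 1) = x * x ^ (j + 1) := by ring
    rw [h, hleibniz, ih]
    push_cast
    ring

private lemma key (hadd : ∀ a b : K, d (a + b) = d a + d b)
    (hleibniz : ∀ a b : K, d (a * b) = d a * b + a * d b) (φ : Kˣ) :
    ∀ n : ℕ, ∀ m : ℕ, n + 1 ≤ m → ∀ a : K,
      ∑ j ∈ range (m + 1),
        (-1 : K) ^ j * (m.choose j : K) * (↑φ⁻¹ : K) ^ j * d^[n] ((φ : K) ^ j * a) = 0 := by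
  set f : K := (↑φ⁻¹ : K) with hf
  set u : K := (↑φ : K) with hu
  have hfu : f * u = 1 := φ.inv_mul
  set D : K →+ K := AddMonoidHom.mk' d hadd with hD
  have hDd : ∀ x : K, D x = d x := fun _ => rfl
  have dint : ∀ (c : ℤ) (x : K), d ((c : K) * x) = (c : K) * d x := by
    intro c x
    have h1 : (c : K) * x = c • x := by rw [zsmul_eq_mul]
    have h2 : (c : K) * d x = c • d x := by rw [zsmul_eq_mul]
    rw [h1, h2, ← hDd, ← hDd, map_zsmul]
  have dsum : ∀ (s : Finset ℕ) (g : ℕ → K), d (∑ i ∈ s, g i) = ∑ i ∈ s, d (g i) := by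
    intro s g
    rw [← hDd, map_sum]
    simp [hDd]
  intro n
  induction n with
  | zero =>
    intro m hm a
    simp only [Function.iterate_zero, id_eq]
    have h1 : ∀ j ∈ range (m + 1),
        (-1 : K) ^ j * (m.choose j : K) * f ^ j * (u ^ j * a)
          = ((-1 : K) ^ j * (m.choose j : K)) * a := by
      intro j _
      have hpw : f ^ j * u ^ j = 1 := by rw [← mul_pow, hfu, one_pow]
      calc (-1 : K) ^ j * (m.choose j : K) * f ^ j * (u ^ j * a)
          = ((-1 : K) ^ j * (m.choose j : K)) * ((f ^ j * u ^ j) * a) := by ring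
        _ = ((-1 : K) ^ j * (m.choose j : K)) * a := by rw [hpw, one_mul]
    rw [Finset.sum_congr rfl h1, ← Finset.sum_mul]
    have hz : ∑ j ∈ range (m + 1), (-1 : ℤ) ^ j * (m.choose j : ℤ) = 0 := by
      rw [Int.alternating_sum_range_choose]
      have hne : m ≠ 0 := by omega
      simp [hne]
    have hK : ∑ j ∈ range (m + 1), (-1 : K) ^ j * (m.choose j : K) = 0 := by
      have hc := congrArg (fun z : ℤ => (z : K)) hz
      push_cast at hc
      exact hc
    rw [hK, zero_mul]
  | succ n IH =>
    intro m hm a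
    obtain ⟨m', rfl⟩ : ∃ m', m = m' + 1 := ⟨m - 1, by omega⟩
    have hst : ∀ j ∈ range (m' + 1 + 1),
        (-1 : K) ^ j * ((m' + 1).choose j : K) * f ^ j * d^[n + 1] (u ^ j * a)
          = d (((-1 : K) ^ j * ((m' + 1).choose j : K)) * (f ^ j * d^[n] (u ^ j * a)))
            - ((-1 : K) ^ j * ((m' + 1).choose j : K)) * (d (f ^ j) * d^[n] (u ^ j * a)) := by
      intro j _
      rw [Function.iterate_succ_apply']
      have hcz : ((-1 : K) ^ j * ((m' + 1).choose j : K))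
          = (((-1 : ℤ) ^ j * ((m' + 1).choose j : ℤ) : ℤ) : K) := by push_cast; ring
      rw [hcz, dint]
      have hl := hleibniz (f ^ j) (d^[n] (u ^ j * a))
      rw [hl]
      ring
    rw [Finset.sum_congr rfl hst, Finset.sum_sub_distrib]
    -- first sum is d of (IH sum) = d 0 = 0
    have h1 : ∑ j ∈ range (m' + 1 + 1),
        d (((-1 : K) ^ j * ((m' + 1).choose j : K)) * (f ^ j * d^[n] (u ^ j * a))) = 0 := by
      rw [← dsum]
      have heq : ∑ j ∈ range (m' + 1 + 1),
          ((-1 : K) ^ j * ((m' + 1).choose j : K)) * (f ^ j * d^[n] (u ^ j * a))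
          = ∑ j ∈ range (m' + 1 + 1),
          (-1 : K) ^ j * ((m' + 1).choose j : K) * f ^ j * d^[n] (u ^ j * a) := by
        apply Finset.sum_congr rfl
        intro j _; ring
      rw [heq, IH (m' + 1) (by omega) a]
      have h0 : d (0 : K) = 0 := by
        have h := hadd 0 0
        rw [add_zero] at h
        exact (left_eq_add.mp h)
      exact h0
    rw [h1]
    -- second sum
    have h2 : ∑ j ∈ range (m' + 1 + 1),
        ((-1 : K) ^ j * ((m' + 1).choose j : K)) * (d (f ^ j) * d^[n] (u ^ j * a)) = 0 := by
      rw [Finset.sum_range_succ']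
      have hj0 : ((-1 : K) ^ 0 * (((m' + 1).choose 0 : ℕ) : K)) *
          (d (f ^ 0) * d^[n] (u ^ 0 * a)) = 0 := by
        simp [done' d hleibniz]
      rw [hj0, add_zero]
      have hterm : ∀ i ∈ range (m' + 1),
          ((-1 : K) ^ (i + 1) * (((m' + 1).choose (i + 1) : ℕ) : K)) *
            (d (f ^ (i + 1)) * d^[n] (u ^ (i + 1) * a))
          = (-((m' : K) + 1) * d f) *
            ((-1 : K) ^ i * ((m'.choose i : ℕ) : K) * f ^ i * d^[n] (u ^ i * (u * a))) := by
        intro i _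
        rw [dpow_succ d hleibniz f i]
        have hch : ((m' + 1).choose (i + 1)) * (i + 1) = (m' + 1) * m'.choose i := by
          rw [← Nat.add_one_mul_choose_eq]
        have hchK : (((m' + 1).choose (i + 1) : ℕ) : K) * ((i : K) + 1)
            = ((m' : K) + 1) * ((m'.choose i : ℕ) : K) := by
          have hc := congrArg (fun z : ℕ => (z : K)) hch
          push_cast at hc
          linear_combination hc
        have hup : u ^ (i + 1) * a = u ^ i * (u * a) := by ring
        rw [hup]
        calc ((-1 : K) ^ (i + 1) * (((m' + 1).choose (i + 1) : ℕ) : K)) *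
              (((i : K) + 1) * f ^ i * d f * d^[n] (u ^ i * (u * a)))
            = -((-1 : K) ^ i) * ((((m' + 1).choose (i + 1) : ℕ) : K) * ((i : K) + 1)) *
              (f ^ i * d f * d^[n] (u ^ i * (u * a))) := by ring
          _ = -((-1 : K) ^ i) * (((m' : K) + 1) * ((m'.choose i : ℕ) : K)) *
              (f ^ i * d f * d^[n] (u ^ i * (u * a))) := by rw [hchK]
          _ = (-((m' : K) + 1) * d f) *
              ((-1 : K) ^ i * ((m'.choose i : ℕ) : K) * f ^ i * d^[n] (u ^ i * (u * a))) := by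
              ring
      rw [Finset.sum_congr rfl hterm, ← Finset.mul_sum]
      rw [IH m' (by omega) (u * a), mul_zero]
    rw [h2, sub_zero]

end Aux

/-- Proposition 3.1: in a commutative differential ring `(K, ∂)`, for a unit
`φ` and `n ≥ 1`,
`(φ⁻¹)⁽ⁿ⁾ = Σ_{k=1}^{n} (−1)^k · C(n+1,k+1) · (φ⁻¹)^{k+1} · (φ^k)⁽ⁿ⁾`. -/
theorem deriv_of_inverse_formula
    (K : Type*) [CommRing K] (d : K → K)
    (hadd : ∀ a b : K, d (a + b) = d a + d b)
    (hleibniz : ∀ a b : K, d (a * b) = d a * b + a * d b)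
    (φ : Kˣ) (n : ℕ) (hn : 1 ≤ n) :
    d^[n] (↑φ⁻¹ : K) =
      ∑ k ∈ Finset.Icc 1 n,
        (-1 : K) ^ k * ((n + 1).choose (k + 1) : K) * (↑φ⁻¹ : K) ^ (k + 1) *
          d^[n] ((φ : K) ^ k) := by
  set f : K := (↑φ⁻¹ : K) with hf
  set u : K := (↑φ : K) with hu
  have hfu : u * f = 1 := φ.mul_inv
  have H := key d hadd hleibniz φ n (n + 1) le_rfl f
  rw [Finset.sum_range_succ', Finset.sum_range_succ'] at H
  -- j = 0 term
  have h0 : (-1 : K) ^ 0 * (((n + 1).choose 0 : ℕ) : K) * f ^ 0 * d^[n] (u ^ 0 * f)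
      = d^[n] f := by simp
  -- j = 1 term
  have hdn1 : d^[n] (1 : K) = 0 := by
    obtain ⟨n', rfl⟩ : ∃ n', n = n' + 1 := ⟨n - 1, by omega⟩
    rw [Function.iterate_succ_apply, done' d hleibniz]
    have h00 : d (0 : K) = 0 := by
      have h := hadd 0 0
      rw [add_zero] at h
      exact (left_eq_add.mp h)
    exact Function.iterate_fixed h00 n'
  have h1 : (-1 : K) ^ (0 + 1) * (((n + 1).choose (0 + 1) : ℕ) : K) * f ^ (0 + 1) *
      d^[n] (u ^ (0 + 1) * f) = 0 := by
    have : u ^ (0 + 1) * f = 1 := by rw [pow_one, hfu]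
    rw [this, hdn1, mul_zero]
  rw [h0, h1, add_zero] at H
  have hterm : ∀ i ∈ range n,
      (-1 : K) ^ (i + 1 + 1) * (((n + 1).choose (i + 1 + 1) : ℕ) : K) * f ^ (i + 1 + 1) *
        d^[n] (u ^ (i + 1 + 1) * f)
      = (-1 : K) ^ i * (((n + 1).choose (i + 2) : ℕ) : K) * f ^ (i + 2) *
        d^[n] (u ^ (i + 1)) := by
    intro i _
    have hup : u ^ (i + 1 + 1) * f = u ^ (i + 1) := by
      rw [pow_succ, mul_assoc, hfu, mul_one]
    rw [hup]
    ring_nf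
  rw [Finset.sum_congr rfl hterm] at H
  -- now H : ∑ i ∈ range n, (-1)^i * C(n+1,i+2) * f^(i+2) * d^[n](u^(i+1)) + d^[n] f = 0
  have hgoal : ∑ k ∈ Finset.Icc 1 n,
      (-1 : K) ^ k * ((n + 1).choose (k + 1) : K) * f ^ (k + 1) * d^[n] (u ^ k)
      = ∑ i ∈ range n,
      (-1 : K) ^ (i + 1) * (((n + 1).choose (i + 2) : ℕ) : K) * f ^ (i + 2) *
        d^[n] (u ^ (i + 1)) := by
    rw [← Finset.Ico_add_one_right_eq_Icc, Finset.sum_Ico_eq_sum_range]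
    try simp only [Nat.add_sub_cancel]
    apply Finset.sum_congr rfl
    intro i _
    have e1 : 1 + i = i + 1 := by omega
    rw [e1]
  rw [hgoal]
  have hflip : ∀ i ∈ range n,
      (-1 : K) ^ (i + 1) * (((n + 1).choose (i + 2) : ℕ) : K) * f ^ (i + 2) *
        d^[n] (u ^ (i + 1))
      = -((-1 : K) ^ i * (((n + 1).choose (i + 2) : ℕ) : K) * f ^ (i + 2) *
        d^[n] (u ^ (i + 1))) := by
    intro i _
    ring
  have hss : ∑ i ∈ range n,
      (-1 : K) ^ (i + 1) * (((n + 1).choose (i + 2) : ℕ) : K) * f ^ (i + 2) *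
        d^[n] (u ^ (i + 1))
      = -∑ i ∈ range n,
      (-1 : K) ^ i * (((n + 1).choose (i + 2) : ℕ) : K) * f ^ (i + 2) *
        d^[n] (u ^ (i + 1)) := by
    rw [← Finset.sum_neg_distrib]
    exact Finset.sum_congr rfl hflip
  linear_combination H - hss
end

section
/- There exist a bump function α : ℝ → ℝ and constants c, d > 0 such that ‖α‖_n ≤ c·n^{dn} for every integer n ≥ 1. -/
/-!
The bump is the normalised primitive `x ↦ ∫₀ˣ φ / ∫₀¹ φ` of `φ(t) = f(t) f(1 - t)`, where
`f = expNegInvGlue` is `exp (-1/x)` for `x > 0`. By induction `f⁽ᵏ⁾(x) = P_k(1/x) exp (-1/x)` with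
`P_{k+1} = X² (P_k - P_k')`. The norm `‖Σ aᵢ Xⁱ‖ = Σ |aᵢ| i!` dominates `|p(y)| e^{-y}` for `y ≥ 0`,
at most doubles under `p ↦ p - p'`, and grows by a factor `d + 1` under `p ↦ X p` when `deg p ≤ d`;
hence `|f⁽ᵏ⁾| ≤ 2ᵏ (2k)!`. Leibniz' rule gives `|φ⁽ᵐ⁾| ≤ 4ᵐ (2m)!`, and `4ⁿ (2n)! ≤ 8 n^{6n}`.
-/

open Real Set Polynomial Finset
open scoped Nat

lemma pow_mul_exp_neg_le_factorial {y : ℝ} (hy : 0 ≤ y) (i : ℕ) : y ^ i * exp (-y) ≤ i ! := by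
  have h := pow_div_factorial_le_exp y hy i
  rw [div_le_iff₀ (by positivity)] at h
  rw [exp_neg, ← div_eq_mul_inv, div_le_iff₀ (exp_pos y)]
  linarith

namespace Polynomial

def factorialNorm (p : ℝ[X]) : ℝ := p.sum fun i a => |a| * i !

lemma factorialNorm_eq_sum_range {p : ℝ[X]} {n : ℕ} (hn : p.natDegree < n) :
    p.factorialNorm = ∑ i ∈ range n, |p.coeff i| * i ! :=
  sum_over_range' p (fun _ => by simp) n hn

lemma abs_eval_mul_exp_neg_le_factorialNorm (p : ℝ[X]) {y : ℝ} (hy : 0 ≤ y) :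
    |p.eval y * exp (-y)| ≤ p.factorialNorm := by
  rw [eval_eq_sum, factorialNorm, Polynomial.sum_def, Polynomial.sum_def, sum_mul]
  refine (abs_sum_le_sum_abs _ _).trans (sum_le_sum fun i _ => ?_)
  rw [mul_assoc, abs_mul, abs_of_nonneg (a := y ^ i * exp (-y)) (by positivity)]
  gcongr
  exact pow_mul_exp_neg_le_factorial hy i

lemma factorialNorm_sub_le (p q : ℝ[X]) :
    (p - q).factorialNorm ≤ p.factorialNorm + q.factorialNorm := by
  set n := max p.natDegree q.natDegree + 1
  rw [factorialNorm_eq_sum_range (n := n) ((natDegree_sub_le p q).trans_lt (lt_add_one _)),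
    factorialNorm_eq_sum_range (n := n) (by omega), factorialNorm_eq_sum_range (n := n) (by omega),
    ← sum_add_distrib]
  gcongr with i
  rw [coeff_sub, ← add_mul]
  gcongr
  exact abs_sub _ _

lemma factorialNorm_derivative_le (p : ℝ[X]) :
    (derivative p).factorialNorm ≤ p.factorialNorm := by
  have hd : (derivative p).natDegree < p.natDegree + 1 :=
    (natDegree_derivative_le p).trans_lt (by omega)
  rw [factorialNorm_eq_sum_range hd,
    factorialNorm_eq_sum_range (p := p) (n := p.natDegree + 1 + 1) (by omega),
    sum_range_succ' _ (p.natDegree + 1)]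
  refine le_add_of_le_of_nonneg (sum_le_sum fun i _ => le_of_eq ?_) (by positivity)
  rw [coeff_derivative, abs_mul, Nat.factorial_succ, Nat.cast_mul, Nat.cast_succ,
    abs_of_nonneg (a := (i : ℝ) + 1) (by positivity)]
  ring

lemma factorialNorm_X_mul_le {p : ℝ[X]} {d : ℕ} (hp : p.natDegree ≤ d) :
    (X * p).factorialNorm ≤ (d + 1) * p.factorialNorm := by
  have hXp : (X * p).natDegree < d + 1 + 1 :=
    (natDegree_mul_le.trans (add_le_add natDegree_X_le hp)).trans_lt (by omega)
  rw [factorialNorm_eq_sum_range hXp, sum_range_succ',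
    factorialNorm_eq_sum_range (n := d + 1) (by omega), mul_sum]
  simp only [coeff_X_mul, coeff_X_mul_zero, abs_zero, zero_mul, add_zero, Nat.factorial_succ]
  refine sum_le_sum fun i hi => ?_
  have hid : (i : ℝ) + 1 ≤ d + 1 := by exact_mod_cast mem_range.mp hi
  push_cast
  rw [mul_left_comm]
  gcongr

lemma natDegree_sub_derivative_le {R : Type*} [Ring R] (p : R[X]) :
    (p - derivative p).natDegree ≤ p.natDegree :=
  (natDegree_sub_le _ _).trans (max_le le_rfl ((natDegree_derivative_le _).trans (by omega)))

end Polynomial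

noncomputable section

namespace expNegInvGlue

def derivPoly : ℕ → ℝ[X]
  | 0 => 1
  | k + 1 => X ^ 2 * (derivPoly k - derivative (derivPoly k))

lemma iteratedDeriv_eq_derivPoly (k : ℕ) :
    iteratedDeriv k expNegInvGlue = fun x => (derivPoly k).eval x⁻¹ * expNegInvGlue x := by
  induction k with
  | zero => funext x; simp [derivPoly]
  | succ k ih =>
    funext x
    rw [iteratedDeriv_succ, ih, (hasDerivAt_polynomial_eval_inv_mul _ x).deriv, derivPoly]

lemma natDegree_derivPoly_le (k : ℕ) : (derivPoly k).natDegree ≤ 2 * k := by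
  induction k with
  | zero => simp [derivPoly]
  | succ k ih =>
    have hsub := (natDegree_sub_derivative_le (derivPoly k)).trans ih
    exact natDegree_mul_le.trans (by simp only [natDegree_X_pow]; omega)

lemma factorialNorm_derivPoly_le (k : ℕ) : (derivPoly k).factorialNorm ≤ 2 ^ k * (2 * k)! := by
  induction k with
  | zero => simp [derivPoly, factorialNorm_eq_sum_range (n := 1)]
  | succ k ih =>
    set q := derivPoly k - derivative (derivPoly k)
    have hq : q.natDegree ≤ 2 * k :=
      (natDegree_sub_derivative_le _).trans (natDegree_derivPoly_le k)
    have hXq : (X * q).natDegree ≤ 2 * k + 1 :=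
      natDegree_mul_le.trans (by have := natDegree_X_le (R := ℝ); omega)
    have hNq : q.factorialNorm ≤ 2 * (2 ^ k * (2 * k)!) := by
      linarith [factorialNorm_sub_le (derivPoly k) (derivative (derivPoly k)),
        factorialNorm_derivative_le (derivPoly k)]
    calc (derivPoly (k + 1)).factorialNorm = (X * (X * q)).factorialNorm := by
          rw [derivPoly, pow_two, mul_assoc]
      _ ≤ (2 * k + 1 + 1) * ((2 * k + 1) * q.factorialNorm) := by
          refine (factorialNorm_X_mul_le hXq).trans ?_
          push_cast
          gcongr
          simpa using factorialNorm_X_mul_le hq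
      _ ≤ (2 * k + 1 + 1) * ((2 * k + 1) * (2 * (2 ^ k * (2 * k)!))) := by gcongr
      _ = 2 ^ (k + 1) * (2 * (k + 1))! := by
          rw [show 2 * (k + 1) = 2 * k + 1 + 1 by ring, Nat.factorial_succ, Nat.factorial_succ]
          push_cast
          ring

lemma abs_iteratedDeriv_le (k : ℕ) (x : ℝ) :
    |iteratedDeriv k expNegInvGlue x| ≤ 2 ^ k * (2 * k)! := by
  rw [iteratedDeriv_eq_derivPoly]
  dsimp only
  rcases le_or_gt x 0 with hx | hx
  · rw [zero_of_nonpos hx, mul_zero, abs_zero]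
    positivity
  · have hexp : expNegInvGlue x = exp (-x⁻¹) := if_neg hx.not_ge
    rw [hexp]
    exact ((derivPoly k).abs_eval_mul_exp_neg_le_factorialNorm (by positivity)).trans
      (factorialNorm_derivPoly_le k)

end expNegInvGlue

def bumpDensity : ℝ → ℝ := fun t => expNegInvGlue t * expNegInvGlue (1 - t)

lemma contDiff_bumpDensity {n : ℕ∞} : ContDiff ℝ n bumpDensity := by
  unfold bumpDensity
  fun_prop

lemma bumpDensity_nonneg (t : ℝ) : 0 ≤ bumpDensity t :=
  mul_nonneg (expNegInvGlue.nonneg _) (expNegInvGlue.nonneg _)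

lemma bumpDensity_pos {t : ℝ} (h₀ : 0 < t) (h₁ : t < 1) : 0 < bumpDensity t :=
  mul_pos (expNegInvGlue.pos_of_pos h₀) (expNegInvGlue.pos_of_pos (by linarith))

lemma bumpDensity_eq_zero {t : ℝ} (ht : t ≤ 0 ∨ 1 ≤ t) : bumpDensity t = 0 := by
  rcases ht with ht | ht
  · rw [bumpDensity, expNegInvGlue.zero_of_nonpos ht, zero_mul]
  · rw [bumpDensity, expNegInvGlue.zero_of_nonpos (show 1 - t ≤ 0 by linarith), mul_zero]

lemma abs_iteratedDeriv_bumpDensity_le (m : ℕ) (t : ℝ) :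
    |iteratedDeriv m bumpDensity t| ≤ 4 ^ m * (2 * m)! := by
  have hreflect (j : ℕ) : |iteratedDeriv j (fun u => expNegInvGlue (1 - u)) t|
      = |iteratedDeriv j expNegInvGlue (1 - t)| := by
    rw [iteratedDeriv_comp_const_sub]
    dsimp only
    rw [smul_eq_mul, abs_mul, abs_pow, abs_neg, abs_one, one_pow, one_mul]
  have hterm (i : ℕ) (hi : i ≤ m) :
      ((2 ^ i * (2 * i)! : ℕ) : ℝ) * ((2 ^ (m - i) * (2 * (m - i))! : ℕ) : ℝ)
        ≤ ((2 ^ m * (2 * m)! : ℕ) : ℝ) := by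
    rw [← Nat.cast_mul, Nat.cast_le, mul_mul_mul_comm, ← pow_add, Nat.add_sub_cancel' hi]
    refine Nat.mul_le_mul_left _ (Nat.le_of_dvd (Nat.factorial_pos _) ?_)
    convert Nat.factorial_mul_factorial_dvd_factorial_add (2 * i) (2 * (m - i)) using 2
    omega
  unfold bumpDensity
  rw [iteratedDeriv_fun_mul (by fun_prop) (by fun_prop)]
  calc _ ≤ ∑ i ∈ range (m + 1), (m.choose i : ℝ) * ((2 ^ m * (2 * m)! : ℕ) : ℝ) := by
        refine (abs_sum_le_sum_abs _ _).trans (sum_le_sum fun i hi => ?_)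
        rw [abs_mul, abs_mul, Nat.abs_cast, hreflect, mul_assoc]
        gcongr
        refine le_trans ?_ (hterm i (Nat.lt_succ_iff.mp (mem_range.mp hi)))
        push_cast
        gcongr
        · exact expNegInvGlue.abs_iteratedDeriv_le i t
        · exact expNegInvGlue.abs_iteratedDeriv_le (m - i) (1 - t)
    _ = 4 ^ m * (2 * m)! := by
        rw [← sum_mul, ← Nat.cast_sum, Nat.sum_range_choose]
        push_cast
        rw [show (4 : ℝ) ^ m = 2 ^ m * 2 ^ m by rw [← mul_pow]; norm_num]
        ring

def bumpMass : ℝ := ∫ t in (0 : ℝ)..1, bumpDensity t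

lemma bumpMass_pos : 0 < bumpMass :=
  intervalIntegral.intervalIntegral_pos_of_pos_on
    ((contDiff_bumpDensity (n := 0)).continuous.intervalIntegrable 0 1)
    (fun _ ht => bumpDensity_pos ht.1 ht.2) one_pos

def bump (x : ℝ) : ℝ := (∫ t in (0 : ℝ)..x, bumpDensity t) / bumpMass

lemma hasDerivAt_bump (x : ℝ) : HasDerivAt bump (bumpDensity x / bumpMass) x :=
  ((contDiff_bumpDensity (n := 0)).continuous.integral_hasStrictDerivAt 0 x).hasDerivAt.div_const _

lemma deriv_bump : deriv bump = fun x => bumpMass⁻¹ * bumpDensity x := by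
  funext x
  rw [(hasDerivAt_bump x).deriv, inv_mul_eq_div]

lemma differentiable_bump : Differentiable ℝ bump := fun x => (hasDerivAt_bump x).differentiableAt

lemma contDiff_bump : ContDiff ℝ (⊤ : ℕ∞) bump := by
  rw [contDiff_infty_iff_deriv, deriv_bump]
  exact ⟨differentiable_bump, contDiff_const.mul contDiff_bumpDensity⟩

lemma integral_bumpDensity_eq_zero {a b : ℝ} (h : ∀ s ∈ uIcc a b, s ≤ 0 ∨ 1 ≤ s) :
    ∫ s in a..b, bumpDensity s = 0 := by
  rw [intervalIntegral.integral_congr fun s hs => bumpDensity_eq_zero (h s hs)]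
  simp

lemma bump_of_nonpos {t : ℝ} (ht : t ≤ 0) : bump t = 0 := by
  rw [bump, integral_bumpDensity_eq_zero fun s hs => Or.inl ?_, zero_div]
  rw [uIcc_of_ge ht] at hs
  exact hs.2

lemma bump_of_one_le {t : ℝ} (ht : 1 ≤ t) : bump t = 1 := by
  have hint := (contDiff_bumpDensity (n := 0)).continuous.intervalIntegrable
    (μ := MeasureTheory.volume)
  rw [bump, ← intervalIntegral.integral_add_adjacent_intervals (hint 0 1) (hint 1 t),
    integral_bumpDensity_eq_zero (a := 1) fun s hs => Or.inr ?_, add_zero, ← bumpMass,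
    div_self bumpMass_pos.ne']
  rw [uIcc_of_le ht] at hs
  exact hs.1

lemma monotone_bump : Monotone bump :=
  monotone_of_deriv_nonneg differentiable_bump fun x => by
    rw [deriv_bump]
    exact mul_nonneg (inv_nonneg.mpr bumpMass_pos.le) (bumpDensity_nonneg x)

lemma strictMonoOn_bump : StrictMonoOn bump (Icc 0 1) :=
  strictMonoOn_of_deriv_pos (convex_Icc 0 1) differentiable_bump.continuous.continuousOn
    fun x hx => by
      rw [interior_Icc] at hx
      rw [deriv_bump]
      exact mul_pos (inv_pos.mpr bumpMass_pos) (bumpDensity_pos hx.1 hx.2)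

lemma abs_bump_le_one (t : ℝ) : |bump t| ≤ 1 := by
  have h₀ : 0 ≤ bump t := (bump_of_nonpos (min_le_right t 0)).symm.le.trans
    (monotone_bump (min_le_left t 0))
  have h₁ : bump t ≤ 1 := (monotone_bump (le_max_left t 1)).trans
    (bump_of_one_le (le_max_right t 1)).le
  exact abs_le.mpr ⟨by linarith, h₁⟩

lemma four_pow_mul_factorial_monotone : Monotone fun k => 4 ^ k * (2 * k)! :=
  fun _ _ h => Nat.mul_le_mul (Nat.pow_le_pow_right (by norm_num) h)
    (Nat.factorial_le (by omega))

lemma four_pow_mul_factorial_le {k n : ℕ} (hk : k ≤ n) (hn : 1 ≤ n) :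
    4 ^ k * (2 * k)! ≤ 8 * n ^ (6 * n) := by
  refine (four_pow_mul_factorial_monotone hk).trans ?_
  obtain rfl | hn₂ := hn.eq_or_lt
  · norm_num
  calc 4 ^ n * (2 * n)! ≤ 4 ^ n * (2 * n) ^ (2 * n) :=
        Nat.mul_le_mul_left _ (Nat.factorial_le_pow _)
    _ = 16 ^ n * n ^ (2 * n) := by rw [mul_pow, ← mul_assoc, pow_mul 2 2 n, ← mul_pow]; norm_num
    _ ≤ (n ^ 4) ^ n * n ^ (2 * n) := by gcongr; exact Nat.pow_le_pow_left hn₂ 4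
    _ = n ^ (6 * n) := by rw [← pow_mul, ← pow_add]; ring_nf
    _ ≤ 8 * n ^ (6 * n) := Nat.le_mul_of_pos_left _ (by norm_num)

lemma abs_iteratedDeriv_bump_le (k : ℕ) (t : ℝ) :
    |iteratedDeriv k bump t| ≤ max 1 bumpMass⁻¹ * (4 ^ k * (2 * k)! : ℕ) := by
  cases k with
  | zero =>
    rw [iteratedDeriv_zero]
    simpa using (abs_bump_le_one t).trans (le_max_left 1 bumpMass⁻¹)
  | succ m =>
    rw [iteratedDeriv_succ', deriv_bump, iteratedDeriv_const_mul_field, abs_mul,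
      abs_of_pos (inv_pos.mpr bumpMass_pos)]
    gcongr
    · exact le_max_right _ _
    · refine (abs_iteratedDeriv_bumpDensity_le m t).trans ?_
      exact_mod_cast four_pow_mul_factorial_monotone m.le_succ

end

/-- Proposition 3.3: there exist a bump function `α` (a `C^∞` function which is
`0` on `(-∞,0]`, strictly increasing on `[0,1]`, and `1` on `[1,∞)`) and
constants `c, d > 0` such that `‖α‖_n = max_{k ≤ n} sup_t |α⁽ᵏ⁾(t)| ≤ c·n^{dn}`
for every `n ≥ 1`. -/
theorem exists_bump_function_with_derivative_bounds :
    ∃ α : ℝ → ℝ, ∃ c d : ℝ, 0 < c ∧ 0 < d ∧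
      ContDiff ℝ (⊤ : ℕ∞) α ∧
      (∀ t : ℝ, t ≤ 0 → α t = 0) ∧
      StrictMonoOn α (Icc 0 1) ∧
      (∀ t : ℝ, 1 ≤ t → α t = 1) ∧
      ∀ n : ℕ, 1 ≤ n → ∀ k : ℕ, k ≤ n → ∀ t : ℝ,
        |iteratedDeriv k α t| ≤ c * (n : ℝ) ^ (d * n) := by
  refine ⟨bump, 8 * max 1 bumpMass⁻¹, 6, by positivity, by norm_num, contDiff_bump,
    fun _ => bump_of_nonpos, strictMonoOn_bump, fun _ => bump_of_one_le, fun n hn k hk t => ?_⟩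
  have hpow : (n : ℝ) ^ ((6 : ℝ) * n) = ((n ^ (6 * n) : ℕ) : ℝ) := by
    rw [← Nat.cast_ofNat, ← Nat.cast_mul, Real.rpow_natCast, Nat.cast_pow]
  calc |iteratedDeriv k bump t| ≤ max 1 bumpMass⁻¹ * (4 ^ k * (2 * k)! : ℕ) :=
        abs_iteratedDeriv_bump_le k t
    _ ≤ max 1 bumpMass⁻¹ * (8 * n ^ (6 * n) : ℕ) :=
        mul_le_mul_of_nonneg_left (by exact_mod_cast four_pow_mul_factorial_le hk hn)
          (by positivity)
    _ = 8 * max 1 bumpMass⁻¹ * (n : ℝ) ^ ((6 : ℝ) * n) := by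
        rw [hpow]
        push_cast
        ring
end

section
/- Let m ∈ ℕ, let f : ℝ → ℝ be of class C^{m+1} with bounded support, and let ε > 0 be real. Set λ(ε) := 8·(‖f‖_{m+1}/ε)²·log⁺(2√2·‖f‖_m/ε). Then for every real λ > λ(ε), the Weierstrass transform f_λ satisfies ‖f_λ − f‖_m ≤ ε. In particular, ‖f_λ − f‖_m ≤ ε whenever λ ≥ 16√2·(‖f‖_{m+1}/ε)³ + 1. -/
open Real Set MeasureTheory

/-- The (generalized) Weierstrass transform with parameter `l > 0`:
`f_l(t) = (l/π)^{1/2} ∫ f(s)·e^{−l(s−t)²} ds`. -/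
noncomputable def weierstrassTransform (l : ℝ) (f : ℝ → ℝ) (t : ℝ) : ℝ :=
  Real.sqrt (l / Real.pi) * ∫ s : ℝ, f s * Real.exp (-l * (s - t) ^ 2)

/-- `‖f‖_m = max_{k ≤ m} sup_t |f⁽ᵏ⁾(t)|`. -/
noncomputable def cNorm (f : ℝ → ℝ) (m : ℕ) : ℝ :=
  sSup {y : ℝ | ∃ k : ℕ, k ≤ m ∧ ∃ t : ℝ, y = |iteratedDeriv k f t|}

open Filter Topology
open scoped Convolution

/-!
The transform commutes with differentiation, so it suffices to compare `g_λ` with `g = f⁽ᵏ⁾`,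
where `|g| ≤ ‖f‖_m` and `|g'| ≤ ‖f‖_{m+1}`. After translation, `g_λ(t) - g(t)` is a Gaussian
average of `u ↦ g (t + u) - g t`. Split at `|u| = δ`: near `0` the mean value theorem bounds the
contribution by `‖f‖_{m+1} δ`, and on the tails `1 ≤ |u| / δ` turns the bound `2 ‖f‖_m` into a
first Gaussian moment, worth `2 ‖f‖_m e^{-λδ²} / (√(πλ) δ)`. With `δ = ε / (2 ‖f‖_{m+1})` both
terms are at most `ε / 2` once `λ > λ(ε)`, unless `2 ‖f‖_m ≤ ε`, when the trivial bound suffices.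
-/

lemma integral_exp_neg_mul_sub_sq (l t : ℝ) :
    ∫ s, exp (-l * (s - t) ^ 2) = √(π / l) := by
  rw [integral_sub_right_eq_self (fun u => exp (-l * u ^ 2)) t, integral_gaussian]

lemma integrable_exp_neg_mul_sub_sq {l : ℝ} (hl : 0 < l) (t : ℝ) :
    Integrable fun s => exp (-l * (s - t) ^ 2) :=
  (integrable_exp_neg_mul_sq hl).comp_sub_right t

lemma weierstrassTransform_const {l : ℝ} (hl : 0 < l) (c t : ℝ) :
    weierstrassTransform l (fun _ => c) t = c := by
  rw [weierstrassTransform, integral_const_mul, integral_exp_neg_mul_sub_sq,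
    mul_left_comm, ← sqrt_mul (by positivity), show l / π * (π / l) = 1 by field_simp,
    sqrt_one, mul_one]

lemma weierstrassTransform_eq_comp_add (l : ℝ) (g : ℝ → ℝ) (t : ℝ) :
    weierstrassTransform l g t = weierstrassTransform l (fun u => g (t + u)) 0 := by
  simp only [weierstrassTransform, sub_zero]
  rw [← integral_add_left_eq_self (fun s => g s * exp (-l * (s - t) ^ 2)) t]
  simp only [add_sub_cancel_left]

lemma weierstrassTransform_sub_const {l t : ℝ} (hl : 0 < l) {g : ℝ → ℝ}
    (hg : Integrable fun s => g s * exp (-l * (s - t) ^ 2)) (c : ℝ) :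
    weierstrassTransform l (fun s => g s - c) t = weierstrassTransform l g t - c := by
  conv_rhs => rw [← weierstrassTransform_const hl c t]
  simp only [weierstrassTransform, sub_mul, ← mul_sub]
  rw [integral_sub hg ((integrable_exp_neg_mul_sub_sq hl t).const_mul c)]

lemma abs_weierstrassTransform_le_of_dominated {l t : ℝ} {g ψ : ℝ → ℝ} (hψ : Integrable ψ)
    (h : ∀ s, |g s| * exp (-l * (s - t) ^ 2) ≤ ψ s) :
    |weierstrassTransform l g t| ≤ √(l / π) * ∫ s, ψ s := by
  rw [weierstrassTransform, abs_mul, abs_of_nonneg (sqrt_nonneg _), ← norm_eq_abs]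
  refine mul_le_mul_of_nonneg_left (norm_integral_le_of_norm_le hψ (Eventually.of_forall
    fun s => ?_)) (sqrt_nonneg _)
  simpa [abs_mul] using h s

lemma abs_weierstrassTransform_le {l B : ℝ} (hl : 0 < l) {g : ℝ → ℝ} (hB : ∀ s, |g s| ≤ B)
    (t : ℝ) : |weierstrassTransform l g t| ≤ B := by
  have h := abs_weierstrassTransform_le_of_dominated
    ((integrable_exp_neg_mul_sub_sq hl t).const_mul B)
    fun s => mul_le_mul_of_nonneg_right (hB s) (exp_pos _).le
  rwa [← weierstrassTransform, weierstrassTransform_const hl] at h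

lemma integral_Ioi_mul_exp_neg_mul_sq {l : ℝ} (hl : 0 < l) (a : ℝ) :
    ∫ x in Ioi a, x * exp (-l * x ^ 2) = exp (-l * a ^ 2) / (2 * l) := by
  have hderiv : ∀ x ∈ Ici a, HasDerivAt (fun x => -exp (-l * x ^ 2) / (2 * l))
      (x * exp (-l * x ^ 2)) x := by
    intro x _
    refine (((hasDerivAt_pow 2 x).const_mul (-l)).exp.neg.div_const (2 * l)).congr_deriv ?_
    field_simp
    ring
  have hlim : Tendsto (fun x => -exp (-l * x ^ 2) / (2 * l)) atTop (𝓝 0) := by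
    have h : Tendsto (fun x : ℝ => -l * x ^ 2) atTop atBot :=
      (tendsto_pow_atTop two_ne_zero).const_mul_atTop_of_neg (neg_neg_of_pos hl)
    simpa using ((tendsto_exp_atBot.comp h).neg.div_const (2 * l))
  rw [integral_Ioi_of_hasDerivAt_of_tendsto' hderiv
    (integrable_mul_exp_neg_mul_sq hl).integrableOn hlim]
  ring

lemma integral_indicator_abs_mul_exp_neg_mul_sq {l δ : ℝ} (hl : 0 < l) (hδ : 0 < δ) :
    ∫ u, {u : ℝ | δ ≤ |u|}.indicator (fun u => |u| * exp (-l * u ^ 2)) u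
      = exp (-l * δ ^ 2) / l := by
  have hcomp : ∀ u : ℝ, {u : ℝ | δ ≤ |u|}.indicator (fun u => |u| * exp (-l * u ^ 2)) u
      = (Ici δ).indicator (fun x => x * exp (-l * x ^ 2)) |u| := by
    intro u
    simp [indicator, sq_abs]
  simp_rw [hcomp]
  have hvanish : ∀ x ∉ Ioi (0 : ℝ), (Ici δ).indicator (fun x => x * exp (-l * x ^ 2)) x = 0 :=
    fun x hx => indicator_of_notMem (fun hxδ => hx (hδ.trans_le hxδ)) _
  rw [integral_comp_abs, setIntegral_eq_integral_of_forall_compl_eq_zero hvanish,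
    integral_indicator measurableSet_Ici, integral_Ici_eq_integral_Ioi,
    integral_Ioi_mul_exp_neg_mul_sq hl]
  field_simp

lemma abs_weierstrassTransform_zero_le {l A B δ : ℝ} (hl : 0 < l) (hδ : 0 < δ) {φ : ℝ → ℝ}
    (hA : ∀ u, |φ u| ≤ A * |u|) (hB : ∀ u, |φ u| ≤ B) :
    |weierstrassTransform l φ 0| ≤ A * δ + B * exp (-l * δ ^ 2) / (√(π * l) * δ) := by
  have hA0 : 0 ≤ A := by simpa using (abs_nonneg _).trans (hA 1)
  have hB0 : 0 ≤ B := (abs_nonneg _).trans (hB 0)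
  set K : ℝ → ℝ := fun u => exp (-l * u ^ 2)
  set tail : ℝ → ℝ := {u : ℝ | δ ≤ |u|}.indicator fun u => |u| * K u
  have hK : Integrable K := integrable_exp_neg_mul_sq hl
  have htail : Integrable tail := by
    refine Integrable.indicator ?_ (measurableSet_le measurable_const measurable_abs)
    simpa [K, abs_mul] using (integrable_mul_exp_neg_mul_sq hl).abs
  have hdom : ∀ u, |φ u| * exp (-l * (u - 0) ^ 2) ≤ A * δ * K u + B / δ * tail u := by
    intro u
    have hKu : 0 ≤ K u := (exp_pos _).le
    rw [sub_zero]
    by_cases hu : δ ≤ |u|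
    · have htail_u : tail u = |u| * K u := by simp [tail, hu]
      calc |φ u| * K u ≤ B * K u := mul_le_mul_of_nonneg_right (hB u) hKu
        _ ≤ B / δ * (|u| * K u) := by
          rw [div_mul_eq_mul_div, le_div_iff₀ hδ]
          nlinarith [mul_le_mul_of_nonneg_left hu (mul_nonneg hB0 hKu)]
        _ ≤ A * δ * K u + B / δ * tail u := by
          rw [htail_u]
          linarith [mul_nonneg (mul_nonneg hA0 hδ.le) hKu]
    · have htail_u : tail u = 0 := by simp [tail, hu]
      rw [htail_u, mul_zero, add_zero]
      exact mul_le_mul_of_nonneg_right ((hA u).trans (by gcongr; exact (not_le.1 hu).le)) hKu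
  refine (abs_weierstrassTransform_le_of_dominated (ψ := fun u => A * δ * K u + B / δ * tail u)
    ((hK.const_mul _).add (htail.const_mul _)) hdom).trans_eq ?_
  rw [integral_add (hK.const_mul _) (htail.const_mul _), integral_const_mul, integral_const_mul,
    integral_indicator_abs_mul_exp_neg_mul_sq hl hδ, integral_gaussian, sqrt_div hl.le,
    sqrt_div pi_pos.le, sqrt_mul pi_pos.le]
  have hl' : √l ^ 2 = l := sq_sqrt hl.le
  field_simp
  linear_combination B * exp (-(δ ^ 2 * l)) * hl'

lemma abs_weierstrassTransform_sub_self_le {l δ M N : ℝ} (hl : 0 < l) (hδ : 0 < δ) {g : ℝ → ℝ}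
    (hg : Differentiable ℝ g) (hM : ∀ x, |g x| ≤ M) (hN : ∀ x, |deriv g x| ≤ N) (t : ℝ) :
    |weierstrassTransform l g t - g t| ≤ N * δ + 2 * M * exp (-l * δ ^ 2) / (√(π * l) * δ) := by
  have hint : Integrable fun s => g s * exp (-l * (s - t) ^ 2) :=
    (integrable_exp_neg_mul_sub_sq hl t).bdd_mul hg.continuous.aestronglyMeasurable
      (Eventually.of_forall hM)
  rw [← weierstrassTransform_sub_const hl hint, weierstrassTransform_eq_comp_add]
  refine abs_weierstrassTransform_zero_le hl hδ (fun u => ?_) (fun u => ?_)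
  · simpa [norm_eq_abs] using convex_univ.norm_image_sub_le_of_norm_deriv_le
      (fun x _ => hg x) (fun x _ => hN x) (mem_univ t) (mem_univ (t + u))
  · linarith [abs_sub (g (t + u)) (g t), hM (t + u), hM t]

lemma abs_weierstrassTransform_sub_self_le_two_mul {l M : ℝ} (hl : 0 < l) {g : ℝ → ℝ}
    (hM : ∀ x, |g x| ≤ M) (t : ℝ) : |weierstrassTransform l g t - g t| ≤ 2 * M := by
  linarith [abs_sub (weierstrassTransform l g t) (g t), abs_weierstrassTransform_le hl hM t, hM t]

lemma weierstrassTransform_eq_convolution (l : ℝ) (g : ℝ → ℝ) :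
    weierstrassTransform l g =
      fun t => √(l / π) * ((fun u => exp (-l * u ^ 2)) ⋆[ContinuousLinearMap.mul ℝ ℝ] g) t := by
  funext t
  rw [weierstrassTransform, convolution_mul_swap]
  congr 1
  refine integral_congr_ae (Eventually.of_forall fun s => ?_)
  simp only [mul_comm (g s), ← neg_sub s t, neg_sq]

lemma deriv_weierstrassTransform {l : ℝ} (hl : 0 < l) {g : ℝ → ℝ} (hg : ContDiff ℝ 1 g)
    (hgs : HasCompactSupport g) :
    deriv (weierstrassTransform l g) = weierstrassTransform l (deriv g) := by
  funext t
  rw [weierstrassTransform_eq_convolution, weierstrassTransform_eq_convolution]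
  exact ((hgs.hasDerivAt_convolution_right _
    (integrable_exp_neg_mul_sq hl).locallyIntegrable hg t).const_mul _).deriv

lemma iteratedDeriv_weierstrassTransform {l : ℝ} (hl : 0 < l) (k : ℕ) {g : ℝ → ℝ}
    (hg : ContDiff ℝ k g) (hgs : HasCompactSupport g) :
    iteratedDeriv k (weierstrassTransform l g) = weierstrassTransform l (iteratedDeriv k g) := by
  induction k generalizing g with
  | zero => simp
  | succ k ih =>
    rw [iteratedDeriv_succ', iteratedDeriv_succ', deriv_weierstrassTransform hl
      (hg.of_le (by exact_mod_cast k.succ_pos)) hgs]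
    exact ih (contDiff_succ_iff_deriv.mp hg).2.2 hgs.deriv

protected lemma HasCompactSupport.iteratedDeriv {f : ℝ → ℝ} (hf : HasCompactSupport f) (k : ℕ) :
    HasCompactSupport (iteratedDeriv k f) := by
  induction k with
  | zero => simpa using hf
  | succ k ih => simpa [iteratedDeriv_succ] using ih.deriv

lemma bddAbove_abs_iteratedDeriv {n : ℕ} {f : ℝ → ℝ} (hf : ContDiff ℝ n f)
    (hsupp : HasCompactSupport f) :
    BddAbove {y : ℝ | ∃ k : ℕ, k ≤ n ∧ ∃ t : ℝ, y = |iteratedDeriv k f t|} := by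
  have hunion : {y : ℝ | ∃ k : ℕ, k ≤ n ∧ ∃ t : ℝ, y = |iteratedDeriv k f t|}
      = ⋃ k ∈ Iic n, range fun t => |iteratedDeriv k f t| := by
    ext y
    simp [eq_comm]
  rw [hunion, (finite_Iic n).bddAbove_biUnion]
  intro k hk
  exact ((hf.continuous_iteratedDeriv k (by exact_mod_cast hk)).abs
    ).bddAbove_range_of_hasCompactSupport (hsupp.iteratedDeriv k).abs

lemma abs_iteratedDeriv_le_cNorm {n k : ℕ} {f : ℝ → ℝ} (hf : ContDiff ℝ n f)
    (hsupp : HasCompactSupport f) (hk : k ≤ n) (t : ℝ) :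
    |iteratedDeriv k f t| ≤ cNorm f n :=
  le_csSup (bddAbove_abs_iteratedDeriv hf hsupp) ⟨k, hk, t, rfl⟩

lemma cNorm_mono {m n : ℕ} {f : ℝ → ℝ} (hf : ContDiff ℝ n f) (hsupp : HasCompactSupport f)
    (hmn : m ≤ n) : cNorm f m ≤ cNorm f n :=
  csSup_le_csSup (bddAbove_abs_iteratedDeriv hf hsupp) ⟨_, 0, m.zero_le, 0, rfl⟩
    fun _ ⟨k, hk, t, hy⟩ => ⟨k, hk.trans hmn, t, hy⟩

lemma one_le_sqrt_pi_mul_mul {l δ : ℝ} (hδ : 0 < δ) (h : log 2 ≤ l * δ ^ 2) :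
    1 ≤ √(π * l) * δ := by
  have hπ : 1 ≤ π * (l * δ ^ 2) := by nlinarith [pi_gt_three, log_two_gt_d9]
  rw [← sqrt_sq hδ.le, ← sqrt_mul' _ (sq_nonneg δ), mul_assoc]
  exact one_le_sqrt.2 hπ

lemma weierstrass_error_bound_le {l ε M N : ℝ} (hε : 0 < ε) (hεM : ε < 2 * M) (hMN : M ≤ N)
    (hl : 8 * (N / ε) ^ 2 * log (2 * √2 * M / ε) < l) :
    N * (ε / (2 * N)) + 2 * M * exp (-l * (ε / (2 * N)) ^ 2) / (√(π * l) * (ε / (2 * N)))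
      ≤ ε := by
  have hM : 0 < M := by linarith
  have hN : 0 < N := hM.trans_le hMN
  set δ := ε / (2 * N)
  have hδ : 0 < δ := by positivity
  set L := log (2 * √2 * M / ε)
  have hx : √2 ≤ 2 * √2 * M / ε := by
    rw [le_div_iff₀ hε]
    nlinarith [sqrt_nonneg 2]
  have hL : log 2 / 2 ≤ L := by
    rw [← log_sqrt zero_le_two]
    exact log_le_log (by positivity) hx
  have hlδ : 2 * L < l * δ ^ 2 := by
    have h8 : 8 * (N / ε) ^ 2 * δ ^ 2 = 2 := by
      simp only [δ]
      field_simp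
      ring
    calc 2 * L = 8 * (N / ε) ^ 2 * L * δ ^ 2 := by rw [← h8]; ring
      _ < l * δ ^ 2 := mul_lt_mul_of_pos_right hl (pow_pos hδ 2)
  have hexp : exp (-l * δ ^ 2) ≤ ε ^ 2 / (8 * M ^ 2) := by
    have h2L : exp (2 * L) = 8 * M ^ 2 / ε ^ 2 := by
      rw [mul_comm, exp_mul, exp_log (by positivity)]
      norm_cast
      rw [div_pow, mul_pow, mul_pow, sq_sqrt zero_le_two]
      ring
    calc exp (-l * δ ^ 2) ≤ exp (-(2 * L)) := exp_le_exp.2 (by linarith)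
      _ = ε ^ 2 / (8 * M ^ 2) := by rw [exp_neg, h2L, inv_div]
  have hsqrt : 1 ≤ √(π * l) * δ := one_le_sqrt_pi_mul_mul hδ (by linarith)
  have hNδ : N * δ = ε / 2 := by
    simp only [δ]
    field_simp
  calc N * δ + 2 * M * exp (-l * δ ^ 2) / (√(π * l) * δ)
      ≤ ε / 2 + 2 * M * (ε ^ 2 / (8 * M ^ 2)) := by
        rw [hNδ]
        gcongr
        exact (div_le_self (by positivity) hsqrt).trans (by gcongr)
    _ ≤ ε := by
        rw [show 2 * M * (ε ^ 2 / (8 * M ^ 2)) = ε / 2 * (ε / (2 * M)) by field_simp; ring]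
        nlinarith [div_lt_one (by positivity : 0 < 2 * M) |>.2 hεM]

lemma weierstrass_threshold_lt {l ε M N : ℝ} (hε : 0 < ε) (hM : 0 ≤ M) (hMN : M ≤ N)
    (hl : 16 * √2 * (N / ε) ^ 3 + 1 ≤ l) :
    8 * (N / ε) ^ 2 * max 0 (log (2 * √2 * M / ε)) < l := by
  have hN : 0 ≤ N := hM.trans hMN
  have hlog : max 0 (log (2 * √2 * M / ε)) ≤ 2 * √2 * (N / ε) :=
    max_le (by positivity) ((log_le_self (by positivity)).trans (by
      rw [mul_div_assoc]
      gcongr))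
  calc 8 * (N / ε) ^ 2 * max 0 (log (2 * √2 * M / ε))
      ≤ 8 * (N / ε) ^ 2 * (2 * √2 * (N / ε)) := by gcongr
    _ = 16 * √2 * (N / ε) ^ 3 := by ring
    _ < l := by linarith

lemma abs_iteratedDeriv_weierstrassTransform_sub_le {m k : ℕ} {f : ℝ → ℝ}
    (hf : ContDiff ℝ (m + 1) f) (hsupp : HasCompactSupport f) {ε l : ℝ} (hε : 0 < ε)
    (hl : 8 * (cNorm f (m + 1) / ε) ^ 2 * max 0 (log (2 * √2 * cNorm f m / ε)) < l)
    (hk : k ≤ m) (t : ℝ) :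
    |iteratedDeriv k (weierstrassTransform l f) t - iteratedDeriv k f t| ≤ ε := by
  have hl0 : 0 < l := lt_of_le_of_lt (by positivity) hl
  have hfm : ContDiff ℝ m f := hf.of_le (by exact_mod_cast m.le_succ)
  rw [iteratedDeriv_weierstrassTransform hl0 k (hfm.of_le (by exact_mod_cast hk)) hsupp]
  have hM : ∀ x, |iteratedDeriv k f x| ≤ cNorm f m := abs_iteratedDeriv_le_cNorm hfm hsupp hk
  rcases le_or_gt (2 * cNorm f m) ε with hsmall | hlarge
  · exact (abs_weierstrassTransform_sub_self_le_two_mul hl0 hM t).trans hsmall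
  have hMN : cNorm f m ≤ cNorm f (m + 1) := cNorm_mono hf hsupp m.le_succ
  have hL : 0 < log (2 * √2 * cNorm f m / ε) := by
    refine log_pos ((one_lt_div hε).2 (hlarge.trans_le ?_))
    nlinarith [one_lt_sqrt_two, hlarge, hε]
  rw [max_eq_right hL.le] at hl
  refine (abs_weierstrassTransform_sub_self_le hl0 (div_pos hε (by linarith))
    (hf.differentiable_iteratedDeriv k (by exact_mod_cast Nat.lt_succ_of_le hk)) hM
    (fun x => ?_) t).trans (weierstrass_error_bound_le hε hlarge hMN hl)
  rw [← iteratedDeriv_succ]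
  exact abs_iteratedDeriv_le_cNorm hf hsupp (Nat.succ_le_succ hk) x

/-- Lemma 4.1: for `f : ℝ → ℝ` of class `C^{m+1}` with bounded support and
`ε > 0`, setting `λ(ε) = 8·(‖f‖_{m+1}/ε)²·log⁺(2√2·‖f‖_m/ε)`, for every
`λ > λ(ε)` the Weierstrass transform satisfies `‖f_λ − f‖_m ≤ ε`; in
particular this holds whenever `λ ≥ 16√2·(‖f‖_{m+1}/ε)³ + 1`. -/
theorem weierstrass_transform_approximation
    (m : ℕ) (f : ℝ → ℝ) (hf : ContDiff ℝ (m + 1) f)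
    (hsupp : HasCompactSupport f) (ε : ℝ) (hε : 0 < ε) :
    (∀ l : ℝ,
      8 * (cNorm f (m + 1) / ε) ^ 2 *
          max 0 (Real.log (2 * Real.sqrt 2 * cNorm f m / ε)) < l →
      ∀ k : ℕ, k ≤ m → ∀ t : ℝ,
        |iteratedDeriv k (weierstrassTransform l f) t - iteratedDeriv k f t| ≤ ε) ∧
    (∀ l : ℝ, 16 * Real.sqrt 2 * (cNorm f (m + 1) / ε) ^ 3 + 1 ≤ l →
      ∀ k : ℕ, k ≤ m → ∀ t : ℝ,
        |iteratedDeriv k (weierstrassTransform l f) t - iteratedDeriv k f t| ≤ ε) := by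
  have hfm : ContDiff ℝ m f := hf.of_le (by exact_mod_cast m.le_succ)
  have hM : 0 ≤ cNorm f m := (abs_nonneg _).trans (abs_iteratedDeriv_le_cNorm hfm hsupp m.zero_le 0)
  refine ⟨fun l hl k hk t => abs_iteratedDeriv_weierstrassTransform_sub_le hf hsupp hε hl hk t,
    fun l hl k hk t => abs_iteratedDeriv_weierstrassTransform_sub_le hf hsupp hε ?_ hk t⟩
  exact weierstrass_threshold_lt hε hM (cNorm_mono hf hsupp m.le_succ) hl
end

section
/- Let β : ℝ → ℝ be a bump function. Then there is no constant c > 0 such that sup_{t∈ℝ} |β^{(n)}(t)| ≤ c^n·n! for every n ∈ ℕ. (Indeed, for every n and every t ∈ (0,1), |β(t)| ≤ (sup_ℝ |β^{(n)}|)·t^n/n!, so such a c would force β to vanish on [0, 1/c], contradicting that β is strictly increasing on [0,1].) -/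
/-!
A bump function is flat at `0`: all its derivatives vanish there. By Taylor's theorem with
Lagrange remainder, a flat function `f` with `|f⁽ⁿ⁾| ≤ cⁿ n!` everywhere satisfies
`|f x| ≤ (c |x|)ⁿ` for every `n`, hence vanishes on `(-1/c, 1/c)`. A bump function, being
strictly increasing on `[0, 1]`, does not.
-/

open Set Filter Topology Nat
open scoped ContDiff

theorem iteratedDeriv_eq_zero_of_forall_le_eq_zero {E : Type*} [NormedAddCommGroup E]
    [NormedSpace ℝ E] {f : ℝ → E} {a : ℝ} {n : ℕ} (hf : ContDiff ℝ n f)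
    (h : ∀ t ≤ a, f t = 0) : ∀ t ≤ a, iteratedDeriv n f t = 0 := by
  have hIio : EqOn (iteratedDeriv n f) 0 (Iio a) := fun t ht => by
    have hfloc : f =ᶠ[𝓝 t] 0 := eventually_of_mem (Iio_mem_nhds ht) fun s hs => h s (le_of_lt hs)
    simpa using (hfloc.iteratedDeriv n).eq_of_nhds
  exact fun t ht => hIio.of_subset_closure (hf.continuous_iteratedDeriv' n).continuousOn
    continuousOn_const Iio_subset_Iic_self (closure_Iio a).ge ht

theorem exists_eq_iteratedDeriv_mul_pow_of_iteratedDeriv_eq_zero {f : ℝ → ℝ} {a x : ℝ} {n : ℕ}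
    (hax : a ≠ x) (hf : ContDiff ℝ (n + 1) f) (hflat : ∀ k ≤ n, iteratedDeriv k f a = 0) :
    ∃ x' ∈ uIoo a x, f x = iteratedDeriv (n + 1) f x' * (x - a) ^ (n + 1) / (n + 1)! := by
  obtain ⟨x', hx', htaylor⟩ := taylor_mean_remainder_lagrange_iteratedDeriv hax hf.contDiffOn
  have hpoly : taylorWithinEval f n (uIcc a x) a x = 0 := by
    rw [taylor_within_apply]
    refine Finset.sum_eq_zero fun k hk => ?_
    have hk : k ≤ n := Nat.lt_succ_iff.mp (Finset.mem_range.mp hk)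
    rw [iteratedDerivWithin_eq_iteratedDeriv (uniqueDiffOn_uIcc hax)
      (hf.contDiffAt.of_le (by exact_mod_cast hk.trans n.le_succ)) left_mem_uIcc, hflat k hk]
    simp
  exact ⟨x', hx', by rwa [hpoly, sub_zero] at htaylor⟩

theorem abs_le_mul_pow_div_factorial_of_iteratedDeriv_eq_zero {f : ℝ → ℝ} {a x M : ℝ} {n : ℕ}
    (hf : ContDiff ℝ n f) (hflat : ∀ k < n, iteratedDeriv k f a = 0)
    (hM : ∀ y, |iteratedDeriv n f y| ≤ M) : |f x| ≤ M * |x - a| ^ n / n ! := by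
  rcases n with _ | n
  · simpa using hM x
  rcases eq_or_ne a x with rfl | hax
  · have : f a = 0 := by simpa using hflat 0 n.succ_pos
    simp [this]
  obtain ⟨x', -, hx'⟩ := exists_eq_iteratedDeriv_mul_pow_of_iteratedDeriv_eq_zero hax
    (by exact_mod_cast hf) fun k hk => hflat k (Nat.lt_succ_of_le hk)
  rw [hx', abs_div, abs_mul, abs_pow, Nat.abs_cast]
  gcongr
  exact hM x'

theorem eq_zero_of_iteratedDeriv_eq_zero_of_abs_iteratedDeriv_le {f : ℝ → ℝ} {a c x : ℝ}
    (hf : ContDiff ℝ ∞ f) (hflat : ∀ n, iteratedDeriv n f a = 0) (hc : 0 ≤ c)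
    (hbound : ∀ n y, |iteratedDeriv n f y| ≤ c ^ n * n !) (hx : c * |x - a| < 1) :
    f x = 0 := by
  have hpow : ∀ n : ℕ, |f x| ≤ (c * |x - a|) ^ n := fun n => calc
    |f x| ≤ c ^ n * n ! * |x - a| ^ n / n ! :=
      abs_le_mul_pow_div_factorial_of_iteratedDeriv_eq_zero
        (hf.of_le (by exact_mod_cast le_top)) (fun k _ => hflat k) (hbound n)
    _ = (c * |x - a|) ^ n := by rw [mul_pow]; field_simp
  have hlim := tendsto_pow_atTop_nhds_zero_of_lt_one (by positivity) hx
  exact abs_nonpos_iff.mp (ge_of_tendsto' hlim hpow)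

theorem bump_function_no_factorial_bound_general
    (β : ℝ → ℝ) (hβ : ContDiff ℝ (⊤ : ℕ∞) β)
    (h0 : ∀ t : ℝ, t ≤ 0 → β t = 0)
    (hmono : StrictMonoOn β (Icc 0 1)) :
    ¬ ∃ c : ℝ, 0 < c ∧ ∀ n : ℕ, ∀ t : ℝ,
        |iteratedDeriv n β t| ≤ c ^ n * (n.factorial : ℝ) := by
  rintro ⟨c, hc, hbound⟩
  have hflat : ∀ n, iteratedDeriv n β 0 = 0 := fun n =>
    iteratedDeriv_eq_zero_of_forall_le_eq_zero (hβ.of_le (by exact_mod_cast le_top)) h0 0 le_rfl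
  set t := (c + 1)⁻¹
  have ht : 0 < t := by positivity
  have hct : c * |t - 0| < 1 := by
    rw [sub_zero, abs_of_pos ht, ← div_eq_mul_inv, div_lt_one (by positivity)]
    linarith
  have hβt : β t = 0 :=
    eq_zero_of_iteratedDeriv_eq_zero_of_abs_iteratedDeriv_le hβ hflat hc.le hbound hct
  have hlt : β 0 < β t :=
    hmono (left_mem_Icc.2 zero_le_one) ⟨ht.le, inv_le_one_of_one_le₀ (by linarith)⟩ ht
  rw [hβt, h0 0 le_rfl] at hlt
  exact lt_irrefl 0 hlt

/-- Remark after Proposition 3.3: for a bump function `β` (a `C^∞` function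
which is `0` on `(-∞,0]`, strictly increasing on `[0,1]`, and `1` on `[1,∞)`)
there is no constant `c > 0` with `sup_t |β⁽ⁿ⁾(t)| ≤ c^n·n!` for all `n`. -/
theorem bump_function_no_factorial_bound
    (β : ℝ → ℝ) (hβ : ContDiff ℝ (⊤ : ℕ∞) β)
    (h0 : ∀ t : ℝ, t ≤ 0 → β t = 0)
    (hmono : StrictMonoOn β (Icc 0 1))
    (h1 : ∀ t : ℝ, 1 ≤ t → β t = 1) :
    ¬ ∃ c : ℝ, 0 < c ∧ ∀ n : ℕ, ∀ t : ℝ,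
        |iteratedDeriv n β t| ≤ c ^ n * (n.factorial : ℝ) :=
  bump_function_no_factorial_bound_general β hβ h0 hmono
end
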